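/- Let C be an essentially small quasi-abelian category with a rank function rk and a slope function μ. For a nonzero object X, let ρ(X) denote the slope of the universal destabilizing subobject of X, i.e. ρ(X) = max of μ(M) over all nonzero strict subobjects M of X. Then a nonzero object N is semistable if and only if ρ(N) ≤ ρ(P) for every nonzero strict quotient P of N (i.e. for every strict epimorphism N → P with P nonzero). -/

import Mathlib

open CategoryTheory CategoryTheory.Limits

universe v u

namespace SlopeFiltrations

variable {C : Type u} [Category.{v} C]

section ZeroMorphisms

variable [HasZeroMorphisms C]

/-- A morphism is a *strict monomorphism* if it is a kernel of some morphism. -/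
def IsStrictMono {M N : C} (f : M ⟶ N) : Prop :=
  ∃ (Z : C) (g : N ⟶ Z) (w : f ≫ g = 0), Nonempty (IsLimit (KernelFork.ofι f w))

/-- A morphism is a *strict epimorphism* if it is a cokernel of some morphism. -/
def IsStrictEpi {M N : C} (f : M ⟶ N) : Prop :=
  ∃ (Z : C) (g : Z ⟶ M) (w : g ≫ f = 0), Nonempty (IsColimit (CokernelCofork.ofπ f w))

/-- `0 ⟶ M ⟶ N ⟶ P ⟶ 0` is a short exact sequence: `f` is a kernel of `g` and `g` is a
cokernel of `f`. -/
def IsShortExactSeq {M N P : C} (f : M ⟶ N) (g : N ⟶ P) : Prop :=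
  ∃ w : f ≫ g = 0,
    Nonempty (IsLimit (KernelFork.ofι f w)) ∧ Nonempty (IsColimit (CokernelCofork.ofπ g w))

end ZeroMorphisms

/-- A *quasi-abelian category* is an additive category with kernels and cokernels in which
every pullback of a strict epimorphism is a strict epimorphism and every pushout of a strict
monomorphism is a strict monomorphism. -/
class IsQuasiAbelian (C : Type u) [Category.{v} C] [Preadditive C]
    [HasKernels C] [HasCokernels C] : Prop where
  strictEpi_of_pullback : ∀ {P X Y Z : C} {fst : P ⟶ X} {snd : P ⟶ Y} {f : X ⟶ Z} {g : Y ⟶ Z},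
    IsPullback fst snd f g → IsStrictEpi f → IsStrictEpi snd
  strictMono_of_pushout : ∀ {P X Y Z : C} {f : P ⟶ X} {g : P ⟶ Y} {inl : X ⟶ Z} {inr : Y ⟶ Z},
    IsPushout f g inl inr → IsStrictMono f → IsStrictMono inr

/-- A *rank function*: a map to `ℕ`, additive on short exact sequences, vanishing exactly on
zero objects. -/
structure RankFunction (C : Type u) [Category.{v} C] [HasZeroMorphisms C] where
  rk : C → ℕ
  rk_zero_iff : ∀ X : C, rk X = 0 ↔ IsZero X
  additive : ∀ {M N P : C} (f : M ⟶ N) (g : N ⟶ P), IsShortExactSeq f g →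
    rk N = rk M + rk P

/-- A *slope function* relative to a rank function: `μ M ≤ μ N` for epi-monic `M ⟶ N`, and
the degree `deg = μ · rk` is additive on short exact sequences. -/
structure SlopeFunction (C : Type u) [Category.{v} C] [HasZeroMorphisms C]
    (R : RankFunction C) where
  μ : C → ℚ
  le_of_mono_epi : ∀ {M N : C} (f : M ⟶ N), Mono f → Epi f →
    ¬ IsZero M → ¬ IsZero N → μ M ≤ μ N
  deg_additive : ∀ {M N P : C} (f : M ⟶ N) (g : N ⟶ P), IsShortExactSeq f g →
    μ N * (R.rk N : ℚ) = μ M * (R.rk M : ℚ) + μ P * (R.rk P : ℚ)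

variable {C : Type u} [Category.{v} C]

/-- A nonzero object `N` is *semistable* (for the slope function `μ`) if `μ M ≤ μ N` for every
nonzero subobject `M` of `N`. -/
def Semistable [HasZeroMorphisms C] (μ : C → ℚ) (N : C) : Prop :=
  ¬ IsZero N ∧ ∀ ⦃M : C⦄ (m : M ⟶ N), Mono m → ¬ IsZero M → μ M ≤ μ N

/-- Semistable of slope `lam`. -/
def SemistableOfSlope [HasZeroMorphisms C] (μ : C → ℚ) (lam : ℚ) (N : C) : Prop :=
  Semistable μ N ∧ μ N = lam

/-- A nonzero object `N` is *stable* if `μ M < μ N` for every nonzero subobject `M` of `N`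
whose inclusion is not an isomorphism. -/
def Stable [HasZeroMorphisms C] (μ : C → ℚ) (N : C) : Prop :=
  ¬ IsZero N ∧ ∀ ⦃M : C⦄ (m : M ⟶ N), Mono m → ¬ IsZero M → ¬ IsIso m → μ M < μ N

section AuxZero

variable [HasZeroMorphisms C]

lemma IsStrictMono.mono' {M N : C} {f : M ⟶ N} (h : IsStrictMono f) : Mono f := by
  obtain ⟨Z, g, w, ⟨hl⟩⟩ := h
  have := mono_of_isLimit_fork hl
  simpa using this

lemma IsStrictEpi.epi' {M N : C} {f : M ⟶ N} (h : IsStrictEpi f) : Epi f := by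
  obtain ⟨Z, g, w, ⟨hc⟩⟩ := h
  have := epi_of_isColimit_cofork hc
  simpa using this

lemma isStrictMono_id' (N : C) : IsStrictMono (𝟙 N) :=
  ⟨N, 0, by simp, ⟨KernelFork.IsLimit.ofι _ _ (fun g' _ => g')
    (fun g' _ => by simp) (fun g' _ m hm => by simpa using hm)⟩⟩

end AuxZero

section Aux

variable [Preadditive C] [HasKernels C] [HasCokernels C]

/-- A strict mono is a kernel of its own cokernel; hence it sits in a short exact sequence. -/
lemma ses_of_strictMono {M N : C} {m : M ⟶ N} (h : IsStrictMono m) :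
    IsShortExactSeq m (cokernel.π m) := by
  obtain ⟨Z, g, w, ⟨hl⟩⟩ := h
  have hm : Mono m := by have := mono_of_isLimit_fork hl; simpa using this
  refine ⟨cokernel.condition m, ⟨?_⟩, ⟨cokernelIsCokernel m⟩⟩
  refine KernelFork.IsLimit.ofι' m _ (fun {A} k hk => ?_)
  have hk' : k ≫ g = 0 := by
    have hg : g = cokernel.π m ≫ cokernel.desc m g w := by simp
    rw [hg, ← Category.assoc, hk, zero_comp]
  obtain ⟨l, hl'⟩ := KernelFork.IsLimit.lift' hl k hk'
  exact ⟨l, by simpa using hl'⟩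

/-- A strict epi is a cokernel of any kernel of it; hence any kernel of it gives a short
exact sequence. -/
lemma ses_of_isKernel_of_strictEpi {K N P : C} {k : K ⟶ N} {e : N ⟶ P} (w : k ≫ e = 0)
    (hk : IsLimit (KernelFork.ofι k w)) (he : IsStrictEpi e) :
    IsShortExactSeq k e := by
  obtain ⟨Z, h, wh, ⟨hc⟩⟩ := he
  have hepi : Epi e := by have := epi_of_isColimit_cofork hc; simpa using this
  refine ⟨w, ⟨hk⟩, ⟨?_⟩⟩
  refine CokernelCofork.IsColimit.ofπ' e w (fun {T} s hs => ?_)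
  obtain ⟨h', hh'⟩ := KernelFork.IsLimit.lift' hk h wh
  have hhs : h ≫ s = 0 := by
    rw [← hh']
    simp only [Fork.ι_ofι] at hh' ⊢
    rw [Category.assoc, hs, comp_zero]
  obtain ⟨d, hd⟩ := CokernelCofork.IsColimit.desc' hc s hhs
  exact ⟨d, by simpa using hd⟩

/-- In particular, a strict epi together with its kernel forms a short exact sequence. -/
lemma ses_kernel_of_strictEpi {N P : C} {e : N ⟶ P} (he : IsStrictEpi e) :
    IsShortExactSeq (kernel.ι e) e :=
  ses_of_isKernel_of_strictEpi (kernel.condition e) (kernelIsKernel e) he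

lemma rk_pos_of_not_isZero (R : RankFunction C) {X : C} (h : ¬ IsZero X) : 0 < R.rk X :=
  Nat.pos_of_ne_zero (fun h0 => h ((R.rk_zero_iff X).1 h0))

/-- The canonical map from a mono to its strict image is epi (uses the quasi-abelian
pushout axiom). -/
lemma epi_image_lift [HasFiniteBiproducts C] [IsQuasiAbelian C]
    {M N : C} (m : M ⟶ N) (hm : Mono m) :
    Epi (kernel.lift (cokernel.π m) m (cokernel.condition m)) := by
  haveI : HasBinaryBiproducts C := hasBinaryBiproducts_of_finite_biproducts C
  haveI : HasCoequalizers C := Preadditive.hasCoequalizers_of_hasCokernels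
  haveI : HasPushouts C := hasPushouts_of_hasBinaryCoproducts_of_hasCoequalizers C
  set j : M ⟶ kernel (cokernel.π m) := kernel.lift (cokernel.π m) m (cokernel.condition m) with hj
  set ι : kernel (cokernel.π m) ⟶ N := kernel.ι (cokernel.π m) with hι
  set q : kernel (cokernel.π m) ⟶ cokernel j := cokernel.π j with hq
  -- pushout of ι along q
  have hpo : IsPushout ι q (pushout.inl ι q) (pushout.inr ι q) := IsPushout.of_hasPushout ι q
  have hιsm : IsStrictMono ι := ⟨_, cokernel.π m, kernel.condition _, ⟨kernelIsKernel _⟩⟩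
  have hinr : IsStrictMono (pushout.inr ι q) :=
    IsQuasiAbelian.strictMono_of_pushout hpo hιsm
  have hinr_mono : Mono (pushout.inr ι q) := hinr.mono'
  -- m ≫ inl = 0
  have hm_inl : m ≫ pushout.inl ι q = 0 := by
    have h1 : m ≫ pushout.inl ι q = j ≫ ι ≫ pushout.inl ι q := by simp [hj, hι]
    rw [h1, pushout.condition, ← Category.assoc, hq, cokernel.condition, zero_comp]
  -- so inl factors through cokernel.π m, hence ι ≫ inl = 0
  have hι_inl : ι ≫ pushout.inl ι q = 0 := by
    have h2 : pushout.inl ι q = cokernel.π m ≫ cokernel.desc m _ hm_inl := by simp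
    rw [h2, ← Category.assoc, kernel.condition, zero_comp]
  have hq0 : q = 0 := by
    have h3 : q ≫ pushout.inr ι q = 0 := by rw [← pushout.condition, hι_inl]
    rwa [← cancel_mono (pushout.inr ι q), zero_comp]
  have : IsZero (cokernel j) := by
    have : Epi q := coequalizer.π_epi
    exact IsZero.of_epi_eq_zero q hq0
  exact Preadditive.epi_of_isZero_cokernel j this

/-- Pulling back a strict epi `π : N ⟶ P` along a strict mono `q : Q' ⟶ P` yields a strict
subobject `N'` of `N` containing the kernel `M₀` of `π`, with `N'/M₀ ≅ Q'`. -/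
lemma exists_pullback_ses [IsQuasiAbelian C]
    {M₀ N P Q' : C} {m₀ : M₀ ⟶ N} {π : N ⟶ P} {q : Q' ⟶ P}
    (hπ : IsStrictEpi π) (w₀ : m₀ ≫ π = 0) (hm₀ : IsLimit (KernelFork.ofι m₀ w₀))
    (hq : IsStrictMono q) :
    ∃ (N' : C) (fst : N' ⟶ N) (k : M₀ ⟶ N') (snd : N' ⟶ Q'),
      IsStrictMono fst ∧ IsStrictEpi snd ∧ IsShortExactSeq k snd := by
  obtain ⟨Z, g, wq, ⟨hql⟩⟩ := hq
  have hq_mono : Mono q := by have := mono_of_isLimit_fork hql; simpa using this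
  have hm₀_mono : Mono m₀ := by have := mono_of_isLimit_fork hm₀; simpa using this
  set N' := kernel (π ≫ g) with hN'
  set fst : N' ⟶ N := kernel.ι (π ≫ g) with hfst_def
  have hfst : IsStrictMono fst := ⟨_, π ≫ g, kernel.condition _, ⟨kernelIsKernel _⟩⟩
  have hcond : (fst ≫ π) ≫ g = 0 := by rw [Category.assoc]; exact kernel.condition _
  obtain ⟨snd, hsnd⟩ := KernelFork.IsLimit.lift' hql (fst ≫ π) hcond
  simp only [Fork.ι_ofι] at hsnd
  -- `(fst, snd)` is a pullback of `(π, q)`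
  have hpb : IsPullback fst snd π q := by
    have hlim : IsLimit (PullbackCone.mk fst snd hsnd.symm) := by
      refine PullbackCone.IsLimit.mk hsnd.symm
        (fun s => kernel.lift (π ≫ g) s.fst ?_) (fun s => kernel.lift_ι _ _ _)
        (fun s => ?_) (fun s m hl hr => ?_)
      · rw [← Category.assoc, s.condition, Category.assoc, wq, comp_zero]
      · rw [← cancel_mono q, Category.assoc, hsnd, ← Category.assoc, kernel.lift_ι,
          s.condition]
      · rw [← cancel_mono fst, kernel.lift_ι, hl]
    have := IsPullback.of_isLimit hlim
    exact this
  have hsnd_se : IsStrictEpi snd := IsQuasiAbelian.strictEpi_of_pullback hpb hπ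
  -- the kernel of `snd` is `M₀`
  set k : M₀ ⟶ N' := kernel.lift (π ≫ g) m₀ (by rw [← Category.assoc, w₀, zero_comp]) with hk_def
  have hkfst : k ≫ fst = m₀ := kernel.lift_ι _ _ _
  have hk_mono : Mono k := by
    have : Mono (k ≫ fst) := by rw [hkfst]; exact hm₀_mono
    exact mono_of_mono k fst
  have hk_snd : k ≫ snd = 0 := by
    rw [← cancel_mono q, Category.assoc, hsnd, ← Category.assoc, hkfst, w₀, zero_comp]
  have hklim : IsLimit (KernelFork.ofι k hk_snd) := by
    refine KernelFork.IsLimit.ofι' k _ (fun {A} s hs => ?_)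
    have hsπ : (s ≫ fst) ≫ π = 0 := by
      rw [Category.assoc, ← hsnd, ← Category.assoc, hs, zero_comp]
    obtain ⟨t, ht⟩ := KernelFork.IsLimit.lift' hm₀ (s ≫ fst) hsπ
    simp only [Fork.ι_ofι] at ht
    refine ⟨t, ?_⟩
    rw [← cancel_mono fst, Category.assoc, hkfst, ht]
  exact ⟨N', fst, k, snd, hfst, hsnd_se,
    ses_of_isKernel_of_strictEpi hk_snd hklim hsnd_se⟩

end Aux

/-- Let `ρ X` be the maximal slope of a nonzero strict subobject of `X` (the slope of the
universal destabilizing subobject). A nonzero object `N` is semistable if and only if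
`ρ N ≤ ρ P` for every nonzero strict quotient `P` of `N`. -/
theorem semistable_iff_highest_break_le
    [Preadditive C] [HasFiniteBiproducts C] [HasKernels C] [HasCokernels C]
    [IsQuasiAbelian C] [EssentiallySmall.{v} C]
    (R : RankFunction C) (S : SlopeFunction C R)
    (ρ : C → ℚ)
    (hρ : ∀ ⦃X : C⦄, ¬ IsZero X →
      (∃ (M : C) (m : M ⟶ X), IsStrictMono m ∧ ¬ IsZero M ∧ S.μ M = ρ X) ∧
      ∀ ⦃M : C⦄ (m : M ⟶ X), IsStrictMono m → ¬ IsZero M → S.μ M ≤ ρ X)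
    (N : C) (hN : ¬ IsZero N) :
    Semistable S.μ N ↔
      ∀ ⦃P : C⦄ (e : N ⟶ P), IsStrictEpi e → ¬ IsZero P → ρ N ≤ ρ P := by
  constructor
  · rintro ⟨-, hss⟩ P e he hP
    -- `ρ N ≤ μ N` by semistability
    obtain ⟨⟨M, m, hmsm, hM, hMμ⟩, -⟩ := hρ hN
    have h1 : ρ N ≤ S.μ N := by
      have := hss m hmsm.mono' hM
      rwa [hMμ] at this
    -- `μ N ≤ μ P` via the short exact sequence `0 ⟶ ker e ⟶ N ⟶ P ⟶ 0`
    have hses := ses_kernel_of_strictEpi he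
    have hdeg := S.deg_additive _ _ hses
    have hrk := R.additive _ _ hses
    have hrkQ : ((R.rk N : ℚ)) = R.rk (kernel e) + R.rk P := by exact_mod_cast hrk
    have hPpos : (0:ℚ) < R.rk P := by exact_mod_cast rk_pos_of_not_isZero R hP
    have h2 : S.μ N ≤ S.μ P := by
      have hdeg2 : S.μ N * ((R.rk (kernel e) : ℚ) + (R.rk P : ℚ))
          = S.μ (kernel e) * (R.rk (kernel e) : ℚ) + S.μ P * (R.rk P : ℚ) := by
        rw [← hrkQ]; exact hdeg
      have hKle : (0:ℚ) ≤ (S.μ N - S.μ (kernel e)) * (R.rk (kernel e) : ℚ) := by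
        by_cases hK : IsZero (kernel e)
        · have hk0 : R.rk (kernel e) = 0 := (R.rk_zero_iff _).2 hK
          rw [hk0]; push_cast; ring_nf; exact le_refl _
        · have hKle' : S.μ (kernel e) ≤ S.μ N := hss (kernel.ι e) inferInstance hK
          exact mul_nonneg (by linarith) (by positivity)
      have hmul : S.μ N * (R.rk P : ℚ) ≤ S.μ P * (R.rk P : ℚ) := by nlinarith [hdeg2, hKle]
      exact le_of_mul_le_mul_right hmul hPpos
    -- `μ P ≤ ρ P`
    have h3 : S.μ P ≤ ρ P := (hρ hP).2 (𝟙 P) (isStrictMono_id' P) hP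
    linarith
  · intro HQ
    -- Key claim: `ρ N ≤ μ N`.
    have key : ∀ n : ℕ, ∀ (M₀ : C) (m₀ : M₀ ⟶ N), IsStrictMono m₀ → ¬ IsZero M₀ →
        S.μ M₀ = ρ N → R.rk N ≤ R.rk M₀ + n → ρ N ≤ S.μ N := by
      intro n
      induction n with
      | zero =>
        intro M₀ m₀ hsm hM₀ hμ hle
        by_cases hPz : IsZero (cokernel m₀)
        · have hepi : Epi m₀ := Preadditive.epi_of_isZero_cokernel m₀ hPz
          have := S.le_of_mono_epi m₀ hsm.mono' hepi hM₀ hN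
          rwa [hμ] at this
        · exfalso
          have hrk := R.additive _ _ (ses_of_strictMono hsm)
          have := rk_pos_of_not_isZero R hPz
          omega
      | succ n ih =>
        intro M₀ m₀ hsm hM₀ hμ hle
        by_cases hPz : IsZero (cokernel m₀)
        · have hepi : Epi m₀ := Preadditive.epi_of_isZero_cokernel m₀ hPz
          have := S.le_of_mono_epi m₀ hsm.mono' hepi hM₀ hN
          rwa [hμ] at this
        · have hπse : IsStrictEpi (cokernel.π m₀) :=
            ⟨M₀, m₀, cokernel.condition m₀, ⟨cokernelIsCokernel m₀⟩⟩
          have hρle : ρ N ≤ ρ (cokernel m₀) := HQ (cokernel.π m₀) hπse hPz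
          obtain ⟨⟨Q', q, hqsm, hQ', hQμ⟩, -⟩ := hρ hPz
          obtain ⟨w₀, ⟨hm₀l⟩, -⟩ := ses_of_strictMono hsm
          obtain ⟨N', fst, k, snd, hfstsm, hsndse, hses'⟩ :=
            exists_pullback_ses hπse w₀ hm₀l hqsm
          haveI hsndepi : Epi snd := hsndse.epi'
          have hN' : ¬ IsZero N' := by
            intro hz
            exact hQ' (IsZero.of_epi_eq_zero snd (hz.eq_zero_of_src snd))
          have hrk' := R.additive _ _ hses'
          have hdeg' := S.deg_additive _ _ hses'
          have hμN'le : S.μ N' ≤ ρ N := (hρ hN).2 fst hfstsm hN'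
          have hQpos : 0 < R.rk Q' := rk_pos_of_not_isZero R hQ'
          have hM₀pos : 0 < R.rk M₀ := rk_pos_of_not_isZero R hM₀
          have hμN' : S.μ N' = ρ N := by
            have hrkQ' : ((R.rk N' : ℚ)) = R.rk M₀ + R.rk Q' := by exact_mod_cast hrk'
            have h1 : S.μ N' * ((R.rk M₀ : ℚ) + (R.rk Q' : ℚ))
                = ρ N * (R.rk M₀ : ℚ) + ρ (cokernel m₀) * (R.rk Q' : ℚ) := by
              rw [← hrkQ', hdeg', hμ, hQμ]
            have hq0 : (0:ℚ) < (R.rk Q' : ℚ) := by exact_mod_cast hQpos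
            have hm0 : (0:ℚ) < (R.rk M₀ : ℚ) := by exact_mod_cast hM₀pos
            have hprod : (0:ℚ) ≤ (ρ (cokernel m₀) - ρ N) * (R.rk Q' : ℚ) :=
              mul_nonneg (sub_nonneg.2 hρle) (le_of_lt hq0)
            have hmul : ρ N * ((R.rk M₀ : ℚ) + (R.rk Q' : ℚ))
                ≤ S.μ N' * ((R.rk M₀ : ℚ) + (R.rk Q' : ℚ)) := by nlinarith [h1, hprod]
            exact le_antisymm hμN'le (le_of_mul_le_mul_right hmul (by positivity))
          apply ih N' fst hfstsm hN' hμN'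
          omega
    obtain ⟨⟨M₀, m₀, hsm, hM₀, hμ⟩, -⟩ := hρ hN
    have hρμ : ρ N ≤ S.μ N := key (R.rk N) M₀ m₀ hsm hM₀ hμ (by omega)
    refine ⟨hN, fun M m hmono hM => ?_⟩
    -- factor `m` through its strict image
    set j : M ⟶ kernel (cokernel.π m) :=
      kernel.lift (cokernel.π m) m (cokernel.condition m) with hj
    have hjepi : Epi j := epi_image_lift m hmono
    have hjmono : Mono j := by
      have : Mono (j ≫ kernel.ι (cokernel.π m)) := by
        rw [hj, kernel.lift_ι]; exact hmono
      exact mono_of_mono j (kernel.ι (cokernel.π m))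
    have hI : ¬ IsZero (kernel (cokernel.π m)) := by
      intro hz
      exact hM (IsZero.of_mono_eq_zero j (hz.eq_zero_of_tgt j))
    have h1 : S.μ M ≤ S.μ (kernel (cokernel.π m)) := S.le_of_mono_epi j hjmono hjepi hM hI
    have h2 : S.μ (kernel (cokernel.π m)) ≤ ρ N :=
      (hρ hN).2 (kernel.ι (cokernel.π m))
        ⟨_, cokernel.π m, kernel.condition _, ⟨kernelIsKernel _⟩⟩ hI
    linarith

end SlopeFiltrations
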